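/- Let k ≥ 3 and n ≥ 2⌈log₂(k−1)⌉ + 4. If A is a k-wise eventown on [n] with |A| > (3/4)·2^⌊n/2⌋ + (k−1)n, then there exist disjoint 2-element subsets B_1, ..., B_{⌊n/2⌋} of [n] such that: if n is even, every member of A is a union of some of the B_i; and if n is odd, letting i* be the element not covered by the B_j, every member of A is either a union of some of the B_j, or is of the form C ∪ {i*} with C a union of some of the B_j, and at most k−1 members of A are of the latter form. -/

import Mathlib

/-!
Identify a set with its characteristic vector in `𝔽₂ⁿ`, so that `|A ∩ B| mod 2` is a dot product.
Repeatedly delete a largest subfamily of at most `k - 1` members whose intersection `T` is odd: by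
maximality (or the `k`-wise property, when it has `k - 1` members) `T` is orthogonal to every
remaining member, while it is not orthogonal to the deleted ones, to which all earlier such `T`s
are orthogonal. So the `T`s are independent, at most `(k - 1) n` members are deleted, and the
rest `ℬ` has even intersections of any `≤ k` members.
Then `ℬ` spans an isotropic subspace `V`, so `dim V ≤ ⌊n/2⌋`, and `|ℬ| > 2^(⌊n/2⌋ - 1)` forces
equality. Even triple intersections make the product of two vectors of `V` orthogonal to `V`, so
by maximality it lies in `V`; a subspace closed under products is spanned by its minimal nonempty
supports, and counting shows that these are `⌊n/2⌋` disjoint pairs. Finally, by downward induction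
on `|C|`, every `A ∈ 𝒜` meets `⋂ C` evenly for each nonempty `C ⊆ ℬ` with `|C| < k`: the set
`A ∩ ⋂ C` meets evenly all members of `ℬ` outside `C`, which still span `V`, so it meets every
pair evenly and, lying in a member of `ℬ`, is a union of pairs. With `|C| = 1` this says that `A`
meets every pair evenly, i.e. `A` is a union of pairs plus possibly the uncovered point, and `k`
members through that point would have an odd intersection.
-/

open Finset Module Matrix Function

section LinearAlgebra
variable {K ι : Type*} [Field K] [Fintype ι]

lemma dotProductBilin_nondegenerate [DecidableEq ι] :
    (dotProductBilin K K : LinearMap.BilinForm K (ι → K)).Nondegenerate := by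
  refine ⟨fun x hx => funext fun i => ?_, fun y hy => funext fun i => ?_⟩
  · simpa using hx (Pi.single i 1)
  · simpa using hy (Pi.single i 1)

theorem two_mul_finrank_le_of_isotropic (V : Submodule K (ι → K))
    (hV : ∀ x ∈ V, ∀ y ∈ V, x ⬝ᵥ y = 0) : 2 * finrank K V ≤ Fintype.card ι := by
  classical
  have hle : V ≤ LinearMap.BilinForm.orthogonal (dotProductBilin K K) V := fun x hx =>
    LinearMap.BilinForm.mem_orthogonal_iff.2 fun y hy => hV y hy x hx
  have := Submodule.finrank_mono hle
  rw [LinearMap.BilinForm.finrank_orthogonal dotProductBilin_nondegenerate,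
    finrank_fintype_fun_eq_card] at this
  have := Submodule.finrank_le V
  rw [finrank_fintype_fun_eq_card] at this
  omega

lemma dotProduct_eq_zero_of_mem_span {s : Set (ι → K)} {y : ι → K}
    (h : ∀ a ∈ s, a ⬝ᵥ y = 0) {x : ι → K} (hx : x ∈ Submodule.span K s) : x ⬝ᵥ y = 0 := by
  induction hx using Submodule.span_induction with
  | mem a ha => exact h a ha
  | zero => exact zero_dotProduct y
  | add a b _ _ ha hb => rw [add_dotProduct, ha, hb, add_zero]
  | smul c a _ ha => rw [smul_dotProduct, ha, smul_zero]

lemma span_isotropic {s : Set (ι → K)} (h : ∀ a ∈ s, ∀ b ∈ s, a ⬝ᵥ b = 0) :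
    ∀ x ∈ Submodule.span K s, ∀ y ∈ Submodule.span K s, x ⬝ᵥ y = 0 := by
  intro x hx y hy
  refine dotProduct_eq_zero_of_mem_span (fun a ha => ?_) hx
  rw [dotProduct_comm]
  exact dotProduct_eq_zero_of_mem_span (fun b hb => h b hb a ha) hy

lemma mul_dotProduct_assoc (x y z : ι → K) : (x * y) ⬝ᵥ z = x ⬝ᵥ (y * z) := by
  simp only [dotProduct, Pi.mul_apply, mul_assoc]

lemma span_mul_dotProduct_eq_zero {s : Set (ι → K)}
    (h : ∀ a ∈ s, ∀ b ∈ s, ∀ c ∈ s, (a * b) ⬝ᵥ c = 0) :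
    ∀ x ∈ Submodule.span K s, ∀ y ∈ Submodule.span K s, ∀ z ∈ Submodule.span K s,
      (x * y) ⬝ᵥ z = 0 := by
  have h₁ : ∀ a ∈ s, ∀ b ∈ s, ∀ z ∈ Submodule.span K s, (a * b) ⬝ᵥ z = 0 :=
    fun a ha b hb z hz => by
      rw [dotProduct_comm]
      exact dotProduct_eq_zero_of_mem_span
        (fun c hc => by rw [dotProduct_comm]; exact h a ha b hb c hc) hz
  have h₂ : ∀ a ∈ s, ∀ y ∈ Submodule.span K s, ∀ z ∈ Submodule.span K s, (a * y) ⬝ᵥ z = 0 :=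
    fun a ha y hy z hz => by
      rw [mul_comm, mul_dotProduct_assoc]
      exact dotProduct_eq_zero_of_mem_span
        (fun b hb => by rw [← mul_dotProduct_assoc, mul_comm]; exact h₁ a ha b hb z hz) hy
  intro x hx y hy z hz
  rw [mul_dotProduct_assoc]
  exact dotProduct_eq_zero_of_mem_span
    (fun a ha => by rw [← mul_dotProduct_assoc]; exact h₂ a ha y hy z hz) hx

theorem mem_of_isotropic_of_two_mul_finrank {V : Submodule K (ι → K)}
    (hV : ∀ x ∈ V, ∀ y ∈ V, x ⬝ᵥ y = 0) (hdim : Fintype.card ι ≤ 2 * finrank K V + 1)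
    {x : ι → K} (hxV : ∀ y ∈ V, x ⬝ᵥ y = 0) (hxx : x ⬝ᵥ x = 0) : x ∈ V := by
  set W := Submodule.span K (insert x (V : Set (ι → K)))
  have hVW : V ≤ W := fun v hv => Submodule.subset_span (Set.mem_insert_of_mem x hv)
  have hW : ∀ a ∈ W, ∀ b ∈ W, a ⬝ᵥ b = 0 := by
    refine span_isotropic ?_
    rintro a (rfl | ha) b (rfl | hb)
    · exact hxx
    · exact hxV b hb
    · rw [dotProduct_comm]; exact hxV a ha
    · exact hV a ha b hb
  have := two_mul_finrank_le_of_isotropic W hW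
  have hWV : V = W := Submodule.eq_of_le_of_finrank_le hVW (by omega)
  exact hWV ▸ Submodule.subset_span (Set.mem_insert x _)

theorem lt_finrank_span_of_pow_lt_card [Fintype K] {s : Finset (ι → K)} {r : ℕ}
    (h : Fintype.card K ^ r < #s) : r < finrank K (Submodule.span K (s : Set (ι → K))) := by
  classical
  set W := Submodule.span K (s : Set (ι → K))
  have hcard : #s ≤ Fintype.card W := by
    rw [← Fintype.card_coe]
    exact Fintype.card_le_of_injective (fun a => ⟨a.1, Submodule.subset_span a.2⟩)
      fun a b hab => Subtype.ext (by simpa using hab)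
  rw [card_eq_pow_finrank (K := K)] at hcard
  exact (Nat.pow_lt_pow_iff_right (Fintype.one_lt_card)).1 (h.trans_le hcard)

end LinearAlgebra

lemma mul_dotProduct_mul_self {ι : Type*} [Fintype ι] (x y : ι → ZMod 2) :
    (x * y) ⬝ᵥ (x * y) = x ⬝ᵥ y :=
  sum_congr rfl fun i _ => by
    simp only [Pi.mul_apply]
    generalize x i = a; generalize y i = b
    revert a b; decide

section CharVec
variable {α : Type*} [DecidableEq α]

def charVec (A : Finset α) : α → ZMod 2 := fun i => if i ∈ A then 1 else 0

lemma charVec_injective : Injective (charVec (α := α)) := by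
  intro A B h
  ext i
  have := congrFun h i
  by_cases hA : i ∈ A <;> by_cases hB : i ∈ B <;> simp_all [charVec]

lemma charVec_inter (A B : Finset α) : charVec (A ∩ B) = charVec A * charVec B := by
  funext i
  by_cases hA : i ∈ A <;> by_cases hB : i ∈ B <;> simp [charVec, hA, hB]

lemma charVec_sdiff (A B : Finset α) : charVec (A \ B) = charVec A - charVec (A ∩ B) := by
  funext i
  by_cases hA : i ∈ A <;> by_cases hB : i ∈ B <;> simp [charVec, hA, hB]

lemma charVec_inter_mem {V : Submodule (ZMod 2) (α → ZMod 2)} (hmul : ∀ x ∈ V, ∀ y ∈ V, x * y ∈ V)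
    {A B : Finset α} (hA : charVec A ∈ V) (hB : charVec B ∈ V) : charVec (A ∩ B) ∈ V :=
  charVec_inter A B ▸ hmul _ hA _ hB

lemma charVec_sdiff_mem {V : Submodule (ZMod 2) (α → ZMod 2)} (hmul : ∀ x ∈ V, ∀ y ∈ V, x * y ∈ V)
    {A B : Finset α} (hA : charVec A ∈ V) (hB : charVec B ∈ V) : charVec (A \ B) ∈ V :=
  charVec_sdiff A B ▸ V.sub_mem hA (charVec_inter_mem hmul hA hB)

lemma charVec_sup {ι : Type*} {f : ι → Finset α} {S : Finset ι}
    (hf : (S : Set ι).PairwiseDisjoint f) : charVec (S.sup f) = ∑ i ∈ S, charVec (f i) := by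
  classical
  induction S using Finset.induction_on with
  | empty => funext i; simp [charVec]
  | insert a S ha ih =>
    rw [coe_insert, Set.pairwiseDisjoint_insert_of_notMem (mem_coe.not.2 ha)] at hf
    have hdisj : Disjoint (f a) (S.sup f) := Finset.disjoint_sup_right.2 fun b hb => hf.2 b hb
    rw [sup_insert, sum_insert ha, ← ih hf.1]
    funext i
    by_cases h₁ : i ∈ f a <;> by_cases h₂ : i ∈ S.sup f
    · exact absurd (hdisj.forall_ne_finset h₁ h₂ rfl) not_false
    all_goals simp [charVec, h₁, h₂, -mem_sup]

lemma charVec_dotProduct [Fintype α] (A B : Finset α) :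
    charVec A ⬝ᵥ charVec B = #(A ∩ B) := by
  simp [dotProduct, charVec, inter_comm]

lemma exists_charVec_eq [Fintype α] (x : α → ZMod 2) : ∃ A, charVec A = x := by
  refine ⟨univ.filter (x · = 1), funext fun i => ?_⟩
  rcases (show ∀ a : ZMod 2, a = 0 ∨ a = 1 by decide) (x i) with h | h <;> simp [charVec, h]

end CharVec

section Saturated
variable {ι α : Type*} [DecidableEq α] {B : ι → Finset α} {A : Finset α}

def Saturated (B : ι → Finset α) (A : Finset α) : Prop := ∀ i, B i ⊆ A ∨ Disjoint A (B i)

lemma saturated_of_even_card_inter (hB : ∀ i, #(B i) = 2) (hA : ∀ i, Even #(A ∩ B i)) :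
    Saturated B A := by
  intro i
  obtain ⟨m, hm⟩ := hA i
  have hle := card_le_card (inter_subset_right (s₁ := A) (s₂ := B i))
  rw [hB i] at hle
  rcases (by omega : m = 0 ∨ m = 1) with rfl | rfl
  · exact .inr (disjoint_iff_inter_eq_empty.2 (card_eq_zero.1 hm))
  · exact .inl (inter_eq_right.1 (eq_of_subset_of_card_le inter_subset_right (by rw [hB i]; omega)))

lemma Saturated.inf [Fintype α] {S : Finset (Finset α)} (h : ∀ A ∈ S, Saturated B A) :
    Saturated B (S.inf id) := by
  intro i
  by_cases hi : ∀ A ∈ S, B i ⊆ A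
  · exact .inl (Finset.le_inf hi)
  · push Not at hi
    obtain ⟨A, hAS, hA⟩ := hi
    exact .inr (((h A hAS i).resolve_left hA).mono_left (inf_le hAS))

lemma Saturated.inter_sup_eq [Fintype ι] (h : Saturated B A) :
    A ∩ univ.sup B = (univ.filter (B · ⊆ A)).sup B := by
  ext x
  simp only [mem_inter, mem_sup, mem_univ, true_and, mem_filter]
  constructor
  · rintro ⟨hxA, i, hxi⟩
    exact ⟨i, (h i).resolve_right fun hd => hd.forall_ne_finset hxA hxi rfl, hxi⟩
  · rintro ⟨i, hi, hxi⟩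
    exact ⟨hi hxi, i, hxi⟩

lemma even_card_sup (hB : ∀ i, Even #(B i)) (hdisj : Pairwise (Disjoint on B)) (S : Finset ι) :
    Even #(S.sup B) := by
  classical
  rw [sup_eq_biUnion, card_biUnion fun i _ j _ hij => hdisj hij]
  exact even_sum _ fun i _ => hB i

lemma Saturated.even_card [Fintype ι] (h : Saturated B A) (hB : ∀ i, Even #(B i))
    (hdisj : Pairwise (Disjoint on B)) (hA : A ⊆ univ.sup B) : Even #A := by
  rw [← inter_eq_left.2 hA, h.inter_sup_eq]
  exact even_card_sup hB hdisj _

lemma card_univ_sup [Fintype ι] (hB : ∀ i, #(B i) = 2) (hdisj : Pairwise (Disjoint on B)) :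
    #(univ.sup B) = 2 * Fintype.card ι := by
  classical
  rw [sup_eq_biUnion, card_biUnion fun i _ j _ hij => hdisj hij, sum_congr rfl fun i _ => hB i,
    sum_const, card_univ, smul_eq_mul, mul_comm]

end Saturated

section Eventown
variable {α : Type*} [Fintype α] [DecidableEq α] {k : ℕ} {𝒜 ℬ : Finset (Finset α)}

def IsEventown (k : ℕ) (𝒜 : Finset (Finset α)) : Prop :=
  ∀ S ⊆ 𝒜, #S = k → Even #(S.inf id)

lemma IsEventown.mono (h : IsEventown k 𝒜) (hℬ : ℬ ⊆ 𝒜) :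
    IsEventown k ℬ :=
  fun S hS => h S (hS.trans hℬ)

def IsEventownUpTo (k : ℕ) (𝒜 : Finset (Finset α)) : Prop :=
  ∀ S ⊆ 𝒜, S.Nonempty → #S ≤ k → Even #(S.inf id)

lemma IsEventownUpTo.mono {j : ℕ} (h : IsEventownUpTo k ℬ) (hjk : j ≤ k) :
    IsEventownUpTo j ℬ :=
  fun S hS hSne hSj => h S hS hSne (hSj.trans hjk)

lemma IsEventownUpTo.even_card_inter (h : IsEventownUpTo 2 ℬ) {A D : Finset α}
    (hA : A ∈ ℬ) (hD : D ∈ ℬ) : Even #(A ∩ D) := by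
  have := h {A, D} (insert_subset hA (singleton_subset_iff.2 hD)) (insert_nonempty _ _) card_le_two
  rwa [inf_insert, inf_singleton] at this

lemma IsEventownUpTo.even_card_inter_inter (h : IsEventownUpTo 3 ℬ)
    {A D E : Finset α} (hA : A ∈ ℬ) (hD : D ∈ ℬ) (hE : E ∈ ℬ) : Even #(A ∩ D ∩ E) := by
  have := h {A, D, E} (insert_subset hA (insert_subset hD (singleton_subset_iff.2 hE)))
    (insert_nonempty _ _) card_le_three
  rwa [inf_insert, inf_insert, inf_singleton, id, id, id, inf_eq_inter, inf_eq_inter,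
    ← inter_assoc] at this

lemma exists_odd_inf_of_not_isEventownUpTo (h𝒜 : IsEventown k 𝒜)
    (hbad : ¬ IsEventownUpTo (k - 1) 𝒜) :
    ∃ S ⊆ 𝒜, S.Nonempty ∧ #S ≤ k - 1 ∧ ¬ Even #(S.inf id) ∧
      ∀ A ∈ 𝒜 \ S, Even #(A ∩ S.inf id) := by
  simp only [IsEventownUpTo, not_forall, exists_prop] at hbad
  obtain ⟨S₀, hS₀⟩ := hbad
  obtain ⟨S, hS, hmax⟩ := exists_max_image
    (𝒜.powerset.filter fun S => S.Nonempty ∧ #S ≤ k - 1 ∧ ¬ Even #(S.inf id)) card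
    ⟨S₀, mem_filter.2 ⟨mem_powerset.2 hS₀.1, hS₀.2⟩⟩
  rw [mem_filter, mem_powerset] at hS
  obtain ⟨hS𝒜, hSne, hSk, hSodd⟩ := hS
  refine ⟨S, hS𝒜, hSne, hSk, hSodd, fun A hA => ?_⟩
  rw [mem_sdiff] at hA
  have hins : insert A S ⊆ 𝒜 := insert_subset hA.1 hS𝒜
  have hcard : #(insert A S) = #S + 1 := card_insert_of_notMem hA.2
  rw [show A ∩ S.inf id = (insert A S).inf id from inf_insert.symm]
  by_cases hk : #S + 1 = k
  · exact h𝒜 _ hins (hcard.trans hk)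
  · by_contra hodd
    have := hSne.card_pos
    have := hmax _ (mem_filter.2 ⟨mem_powerset.2 hins, insert_nonempty _ _, by omega, hodd⟩)
    omega

theorem exists_isEventownUpTo_subset_of_orthogonal (h𝒜 : IsEventown k 𝒜)
    (U : Submodule (ZMod 2) (α → ZMod 2)) (hU : ∀ A ∈ 𝒜, ∀ u ∈ U, charVec A ⬝ᵥ u = 0) :
    ∃ ℬ ⊆ 𝒜, IsEventownUpTo (k - 1) ℬ ∧
      #𝒜 ≤ #ℬ + (k - 1) * (Fintype.card α - finrank (ZMod 2) U) := by
  induction 𝒜 using Finset.strongInduction generalizing U with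
  | H 𝒜 ih =>
  by_cases hgood : IsEventownUpTo (k - 1) 𝒜
  · exact ⟨𝒜, subset_rfl, hgood, le_self_add⟩
  obtain ⟨S, hS𝒜, ⟨A₁, hA₁⟩, hSk, hSodd, hrest⟩ := exists_odd_inf_of_not_isEventownUpTo h𝒜 hgood
  set T := S.inf id
  -- `charVec T` is orthogonal to what remains but not to `A₁`, so it enlarges `U`
  have hTU : charVec T ∉ U := fun h => by
    have := hU A₁ (hS𝒜 hA₁) _ h
    rw [charVec_dotProduct, inter_eq_right.2 (inf_le hA₁), ZMod.natCast_eq_zero_iff_even] at this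
    exact hSodd this
  set U' := U ⊔ Submodule.span (ZMod 2) {charVec T}
  have hUU' : finrank (ZMod 2) U < finrank (ZMod 2) U' :=
    Submodule.finrank_lt_finrank_of_lt <| lt_of_le_of_ne le_sup_left fun h =>
      hTU (h ▸ Submodule.mem_sup_right (Submodule.mem_span_singleton_self _))
  have hU'α : finrank (ZMod 2) U' ≤ Fintype.card α :=
    (Submodule.finrank_le U').trans_eq (finrank_fintype_fun_eq_card _)
  have hU' : ∀ A ∈ 𝒜 \ S, ∀ u ∈ U', charVec A ⬝ᵥ u = 0 := by
    intro A hA u hu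
    obtain ⟨v, hv, w, hw, rfl⟩ := Submodule.mem_sup.1 hu
    obtain ⟨c, rfl⟩ := Submodule.mem_span_singleton.1 hw
    rw [dotProduct_add, dotProduct_smul, hU A (mem_sdiff.1 hA).1 v hv, charVec_dotProduct,
      ZMod.natCast_eq_zero_iff_even.2 (hrest A hA), smul_zero, add_zero]
  obtain ⟨ℬ, hℬ, hℬgood, hℬcard⟩ :=
    ih _ (sdiff_ssubset hS𝒜 ⟨A₁, hA₁⟩) (h𝒜.mono sdiff_subset) U' hU'
  refine ⟨ℬ, hℬ.trans sdiff_subset, hℬgood, ?_⟩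
  have h𝒜S := card_sdiff_add_card_eq_card hS𝒜
  have : (k - 1) * (Fintype.card α - finrank (ZMod 2) U') + (k - 1) ≤
      (k - 1) * (Fintype.card α - finrank (ZMod 2) U) := by
    rw [← mul_add_one]
    exact Nat.mul_le_mul_left _ (by omega)
  omega

theorem exists_isEventownUpTo_subset (h𝒜 : IsEventown k 𝒜) :
    ∃ ℬ ⊆ 𝒜, IsEventownUpTo k ℬ ∧ #𝒜 ≤ #ℬ + (k - 1) * Fintype.card α := by
  obtain ⟨ℬ, hℬ𝒜, hℬ, hcard⟩ := exists_isEventownUpTo_subset_of_orthogonal h𝒜 ⊥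
    fun A _ u hu => by rw [(Submodule.mem_bot _).1 hu, dotProduct_zero]
  refine ⟨ℬ, hℬ𝒜, fun S hS hSne hSk => ?_, by simpa using hcard⟩
  rcases Nat.lt_or_eq_of_le hSk with hlt | heq
  · exact hℬ S hS hSne (by omega)
  · exact h𝒜 S (hS.trans hℬ𝒜) heq
end Eventown

lemma card_eq_and_eq_two_of_sum_le {ι : Type*} {s : Finset ι} {f : ι → ℕ} {d : ℕ}
    (hf : ∀ i ∈ s, 2 ≤ f i ∧ Even (f i)) (hsum : ∑ i ∈ s, f i ≤ 2 * d + 1) (hd : d ≤ #s) :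
    #s = d ∧ ∀ i ∈ s, f i = 2 := by
  classical
  have hlow : ∀ t ⊆ s, #t * 2 ≤ ∑ i ∈ t, f i := fun t ht => by
    simpa using card_nsmul_le_sum t f 2 fun i hi => (hf i (ht hi)).1
  refine ⟨by linarith [hlow s subset_rfl], fun i hi => ?_⟩
  obtain ⟨h2, m, hm⟩ := hf i hi
  have hrest := hlow _ (erase_subset i s)
  rw [← add_sum_erase s f hi] at hsum
  rw [card_erase_of_mem hi] at hrest
  have := card_pos.2 ⟨i, hi⟩
  have : (#s - 1) * 2 + f i ≤ 2 * d + 1 := by omega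
  omega

section Blocks
variable {α : Type*} [DecidableEq α] {V : Submodule (ZMod 2) (α → ZMod 2)}

def IsBlock (V : Submodule (ZMod 2) (α → ZMod 2)) (a : Finset α) : Prop :=
  Minimal (fun a => charVec a ∈ V ∧ a.Nonempty) a

lemma exists_isBlock_mem_subset (hmul : ∀ x ∈ V, ∀ y ∈ V, x * y ∈ V) {A : Finset α}
    (hA : charVec A ∈ V) {i : α} (hi : i ∈ A) : ∃ a ⊆ A, i ∈ a ∧ IsBlock V a := by
  obtain ⟨a, haA, ⟨haV, hia⟩, hmin⟩ :=
    exists_minimal_le_of_wellFoundedLT (fun a => charVec a ∈ V ∧ i ∈ a) A ⟨hA, hi⟩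
  refine ⟨a, haA, hia, ⟨haV, i, hia⟩, fun b ⟨hbV, x, hxb⟩ hba => ?_⟩
  by_cases hib : i ∈ b
  · exact hmin ⟨hbV, hib⟩ hba
  · have := hmin ⟨charVec_sdiff_mem hmul haV hbV, mem_sdiff.2 ⟨hia, hib⟩⟩ sdiff_subset
    exact absurd hxb (mem_sdiff.1 (this (hba hxb))).2

lemma IsBlock.disjoint (hmul : ∀ x ∈ V, ∀ y ∈ V, x * y ∈ V) {a b : Finset α}
    (ha : IsBlock V a) (hb : IsBlock V b) (hab : a ≠ b) : Disjoint a b := by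
  rw [disjoint_iff_inter_eq_empty, ← not_nonempty_iff_eq_empty]
  intro hne
  have hab' : a ⊆ b :=
    (ha.2 ⟨charVec_inter_mem hmul ha.1.1 hb.1.1, hne⟩ inter_subset_left).trans inter_subset_right
  exact hab (le_antisymm hab' (hb.2 ha.1 hab'))

variable [Fintype α]

open scoped Classical in
noncomputable def blocks (V : Submodule (ZMod 2) (α → ZMod 2)) : Finset (Finset α) :=
  univ.filter (IsBlock V)

lemma mem_blocks {a : Finset α} : a ∈ blocks V ↔ IsBlock V a := by
  simp [blocks]

lemma pairwiseDisjoint_blocks (hmul : ∀ x ∈ V, ∀ y ∈ V, x * y ∈ V) :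
    (blocks V : Set (Finset α)).PairwiseDisjoint id := fun _ ha _ hb =>
  IsBlock.disjoint hmul (mem_blocks.1 ha) (mem_blocks.1 hb)

lemma sup_blocks_subset (hmul : ∀ x ∈ V, ∀ y ∈ V, x * y ∈ V) {A : Finset α}
    (hA : charVec A ∈ V) : ((blocks V).filter (· ⊆ A)).sup id = A := by
  refine le_antisymm (Finset.sup_le fun a ha => (mem_filter.1 ha).2) fun i hi => ?_
  obtain ⟨a, haA, hia, ha⟩ := exists_isBlock_mem_subset hmul hA hi
  exact mem_sup.2 ⟨a, mem_filter.2 ⟨mem_blocks.2 ha, haA⟩, hia⟩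

lemma finrank_le_card_blocks (hmul : ∀ x ∈ V, ∀ y ∈ V, x * y ∈ V) :
    finrank (ZMod 2) V ≤ #(blocks V) := by
  have hV : V ≤ Submodule.span (ZMod 2) ((blocks V).image charVec : Set (α → ZMod 2)) := by
    intro x hx
    obtain ⟨A, rfl⟩ := exists_charVec_eq x
    rw [← sup_blocks_subset hmul hx,
      charVec_sup ((pairwiseDisjoint_blocks hmul).subset (filter_subset _ _))]
    exact Submodule.sum_mem _ fun a ha => Submodule.subset_span
      (mem_coe.2 (mem_image_of_mem _ (filter_subset _ _ ha)))
  exact (Submodule.finrank_mono hV).trans ((finrank_span_finset_le_card _).trans card_image_le)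

theorem exists_pairs_of_mul_mem (hmul : ∀ x ∈ V, ∀ y ∈ V, x * y ∈ V) {d : ℕ}
    (heven : ∀ A, charVec A ∈ V → Even #A) (hdim : finrank (ZMod 2) V = d)
    (hα : Fintype.card α ≤ 2 * d + 1) :
    ∃ B : Fin d → Finset α, (∀ i, #(B i) = 2) ∧ Pairwise (Disjoint on B) ∧
      (∀ i, charVec (B i) ∈ V) ∧ ∀ A, charVec A ∈ V → A ⊆ univ.sup B := by
  have hdisj := pairwiseDisjoint_blocks hmul
  have hsum : ∑ a ∈ blocks V, #a ≤ 2 * d + 1 := by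
    rw [show ∑ a ∈ blocks V, #a = ∑ a ∈ blocks V, #(id a) from rfl, ← card_biUnion hdisj]
    exact (card_le_univ _).trans hα
  obtain ⟨hcard, hcard2⟩ := card_eq_and_eq_two_of_sum_le (fun a ha => by
      have ha := mem_blocks.1 ha
      obtain ⟨m, hm⟩ := heven a ha.1.1
      exact ⟨by have := ha.1.2.card_pos; omega, m, hm⟩)
    hsum (hdim ▸ finrank_le_card_blocks hmul)
  let e : Fin d ≃ blocks V := (Fintype.equivFinOfCardEq (by rw [Fintype.card_coe, hcard])).symm
  refine ⟨fun i => e i, fun i => hcard2 _ (e i).2, fun i j hij => hdisj (e i).2 (e j).2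
    fun h => hij (e.injective (Subtype.ext h)), fun i => (mem_blocks.1 (e i).2).1.1,
    fun A hA => ?_⟩
  rw [← sup_blocks_subset hmul hA]
  refine Finset.sup_le fun a ha => ?_
  obtain ⟨i, hi⟩ := e.surjective ⟨a, (mem_filter.1 ha).1⟩
  exact le_sup_of_le (mem_univ i) (by rw [hi]; exact le_rfl)
end Blocks

section CharSpan
variable {α : Type*} [DecidableEq α] {k : ℕ} {ℬ : Finset (Finset α)}

def charSpan (ℬ : Finset (Finset α)) : Submodule (ZMod 2) (α → ZMod 2) :=
  Submodule.span (ZMod 2) (charVec '' ℬ)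

lemma charSpan_mono {ℬ' : Finset (Finset α)} (h : ℬ' ⊆ ℬ) : charSpan ℬ' ≤ charSpan ℬ :=
  Submodule.span_mono (Set.image_mono (coe_subset.2 h))

variable [Fintype α]

lemma even_card_inter_of_mem_charSpan {T A : Finset α} (hT : ∀ D ∈ ℬ, Even #(T ∩ D))
    (hA : charVec A ∈ charSpan ℬ) : Even #(T ∩ A) := by
  rw [← ZMod.natCast_eq_zero_iff_even, ← charVec_dotProduct, dotProduct_comm]
  refine dotProduct_eq_zero_of_mem_span ?_ hA
  rintro _ ⟨D, hD, rfl⟩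
  rw [dotProduct_comm, charVec_dotProduct, ZMod.natCast_eq_zero_iff_even]
  exact hT D hD

lemma charSpan_isotropic (h : ∀ A ∈ ℬ, ∀ D ∈ ℬ, Even #(A ∩ D)) :
    ∀ x ∈ charSpan ℬ, ∀ y ∈ charSpan ℬ, x ⬝ᵥ y = 0 :=
  span_isotropic <| by
    rintro _ ⟨A, hA, rfl⟩ _ ⟨D, hD, rfl⟩
    rw [charVec_dotProduct, ZMod.natCast_eq_zero_iff_even]
    exact h A hA D hD

lemma finrank_charSpan_eq {d : ℕ} (h : ∀ A ∈ ℬ, ∀ D ∈ ℬ, Even #(A ∩ D))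
    (hα : Fintype.card α ≤ 2 * d + 1) (hcard : 2 ^ (d - 1) < #ℬ) :
    finrank (ZMod 2) (charSpan ℬ) = d := by
  classical
  have hle := two_mul_finrank_le_of_isotropic _ (charSpan_isotropic h)
  have hlt := lt_finrank_span_of_pow_lt_card (ι := α) (K := ZMod 2) (s := ℬ.image charVec)
    (r := d - 1) (by rwa [ZMod.card, card_image_of_injective _ charVec_injective])
  rw [coe_image] at hlt
  change d - 1 < finrank (ZMod 2) (charSpan ℬ) at hlt
  omega

lemma charSpan_mul_mem (hℬ : IsEventownUpTo 3 ℬ)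
    (hdim : Fintype.card α ≤ 2 * finrank (ZMod 2) (charSpan ℬ) + 1) :
    ∀ x ∈ charSpan ℬ, ∀ y ∈ charSpan ℬ, x * y ∈ charSpan ℬ := by
  have hiso := charSpan_isotropic fun A hA D hD => (hℬ.mono (by norm_num)).even_card_inter hA hD
  have htriple := span_mul_dotProduct_eq_zero (s := charVec '' (ℬ : Set (Finset α))) <| by
    rintro _ ⟨A, hA, rfl⟩ _ ⟨D, hD, rfl⟩ _ ⟨E, hE, rfl⟩
    rw [← charVec_inter, charVec_dotProduct, ZMod.natCast_eq_zero_iff_even]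
    exact hℬ.even_card_inter_inter hA hD hE
  intro x hx y hy
  exact mem_of_isotropic_of_two_mul_finrank hiso hdim (htriple x hx y hy)
    (by rw [mul_dotProduct_mul_self]; exact hiso x hx y hy)
end CharSpan

section Absorbing
variable {α : Type*} [Fintype α] [DecidableEq α] {k : ℕ} {𝒜 ℬ : Finset (Finset α)}

def IsAbsorbing (m : ℕ) (ℬ : Finset (Finset α)) : Prop :=
  ∀ C : Finset (Finset α), #C ≤ m → ∀ T : Finset α,
    (∃ D ∈ ℬ, T ⊆ D) → (∀ D ∈ ℬ \ C, Even #(T ∩ D)) → Even #T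

lemma IsAbsorbing.even_card_inter_inf (habs : IsAbsorbing (k - 2) ℬ) (h𝒜 : IsEventown k 𝒜)
    (hℬ𝒜 : ℬ ⊆ 𝒜) {A : Finset α} (hA : A ∈ 𝒜) (hAℬ : A ∉ ℬ) (t : ℕ) :
    ∀ C ⊆ ℬ, C.Nonempty → #C + t = k - 1 → Even #(A ∩ C.inf id) := by
  induction t with
  | zero =>
    intro C hC hCne hCk
    rw [show A ∩ C.inf id = (insert A C).inf id from inf_insert.symm]
    refine h𝒜 _ (insert_subset hA (hC.trans hℬ𝒜)) ?_
    rw [card_insert_of_notMem fun h => hAℬ (hC h)]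
    have := hCne.card_pos
    omega
  | succ t ih =>
    intro C hC ⟨D₁, hD₁⟩ hCk
    refine habs C (by omega) _ ⟨D₁, hC hD₁, inter_subset_right.trans (inf_le hD₁)⟩
      fun D hD => ?_
    obtain ⟨hDℬ, hDC⟩ := mem_sdiff.1 hD
    have := ih (insert D C) (insert_subset hDℬ hC) (insert_nonempty _ _)
      (by rw [card_insert_of_notMem hDC]; omega)
    rwa [inf_insert, id, inf_eq_inter, inter_comm D, ← inter_assoc] at this

theorem IsAbsorbing.even_card_inter (habs : IsAbsorbing (k - 2) ℬ) (h𝒜 : IsEventown k 𝒜)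
    (hℬ𝒜 : ℬ ⊆ 𝒜) (hℬ : ∀ A ∈ ℬ, ∀ D ∈ ℬ, Even #(A ∩ D)) (hk : 2 ≤ k) :
    ∀ A ∈ 𝒜, ∀ D ∈ ℬ, Even #(A ∩ D) := by
  intro A hA D hD
  by_cases hAℬ : A ∈ ℬ
  · exact hℬ A hAℬ D hD
  · simpa using habs.even_card_inter_inf h𝒜 hℬ𝒜 hA hAℬ (k - 2) {D}
      (singleton_subset_iff.2 hD) (singleton_nonempty D) (by simp; omega)

theorem exists_pairs_saturated {d : ℕ} (hk : 3 ≤ k) (hα : Fintype.card α ≤ 2 * d + 1)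
    (h𝒜 : IsEventown k 𝒜) (hℬ𝒜 : ℬ ⊆ 𝒜) (hℬ : IsEventownUpTo k ℬ)
    (hcard : 2 ^ (d - 1) + (k - 2) < #ℬ) :
    ∃ B : Fin d → Finset α, (∀ i, #(B i) = 2) ∧ Pairwise (Disjoint on B) ∧
      ∀ A ∈ 𝒜, Saturated B A := by
  have hpair : ∀ A ∈ ℬ, ∀ D ∈ ℬ, Even #(A ∩ D) := fun A hA D hD =>
    (hℬ.mono (by omega)).even_card_inter hA hD
  have hdim : ∀ C, #C ≤ k - 2 → finrank (ZMod 2) (charSpan (ℬ \ C)) = d := fun C hC =>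
    finrank_charSpan_eq (fun A hA D hD => hpair A (mem_sdiff.1 hA).1 D (mem_sdiff.1 hD).1) hα
      (by have := card_le_card_sdiff_add_card (s := ℬ) (t := C); omega)
  have hdimℬ : finrank (ZMod 2) (charSpan ℬ) = d := by
    have := hdim ∅ (by simp)
    rwa [sdiff_empty] at this
  have hspan : ∀ C, #C ≤ k - 2 → charSpan (ℬ \ C) = charSpan ℬ := fun C hC =>
    Submodule.eq_of_le_of_finrank_eq (charSpan_mono sdiff_subset) (by rw [hdim C hC, hdimℬ])
  obtain ⟨B, hB2, hdisj, hBV, hcover⟩ := exists_pairs_of_mul_mem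
    (charSpan_mul_mem (hℬ.mono hk) (by omega))
    (fun A hA => by
      simpa [charVec_dotProduct, ZMod.natCast_eq_zero_iff_even] using
        charSpan_isotropic hpair _ hA _ hA) hdimℬ hα
  have hsat : ∀ C, #C ≤ k - 2 → ∀ T, (∀ D ∈ ℬ \ C, Even #(T ∩ D)) → Saturated B T :=
    fun C hC T hT => saturated_of_even_card_inter hB2 fun i =>
      even_card_inter_of_mem_charSpan hT (hspan C hC ▸ hBV i)
  have habs : IsAbsorbing (k - 2) ℬ := fun C hC T ⟨D, hD, hTD⟩ hT =>
    (hsat C hC T hT).even_card (fun i => (hB2 i).symm ▸ even_two) hdisj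
      (hTD.trans (hcover D (Submodule.subset_span ⟨D, hD, rfl⟩)))
  refine ⟨B, hB2, hdisj, fun A hA => hsat ∅ (by simp) A fun D hD => ?_⟩
  exact habs.even_card_inter h𝒜 hℬ𝒜 hpair (by omega) A hA D (mem_sdiff.1 hD).1
end Absorbing

section Parity
variable {α : Type*} [Fintype α] [DecidableEq α] {d : ℕ} {B : Fin d → Finset α}

theorem Saturated.exists_eq_sup (hB : ∀ i, #(B i) = 2) (hdisj : Pairwise (Disjoint on B))
    (hα : Fintype.card α = 2 * d) {A : Finset α} (hA : Saturated B A) :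
    ∃ S : Finset (Fin d), A = S.sup B := by
  have huniv : univ.sup B = univ := eq_univ_of_card _ (by rw [card_univ_sup hB hdisj, hα,
    Fintype.card_fin])
  exact ⟨_, by rw [← hA.inter_sup_eq, huniv, inter_univ]⟩

lemma exists_mem_univ_sup_iff_ne (hB : ∀ i, #(B i) = 2) (hdisj : Pairwise (Disjoint on B))
    (hα : Fintype.card α = 2 * d + 1) : ∃ i₀, ∀ x, x ∈ univ.sup B ↔ x ≠ i₀ := by
  have hcompl : #(univ.sup B)ᶜ = 1 := by
    rw [card_compl, card_univ_sup hB hdisj, hα, Fintype.card_fin]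
    omega
  obtain ⟨i₀, hi₀⟩ := card_eq_one.1 hcompl
  refine ⟨i₀, fun x => ?_⟩
  rw [← not_iff_not, not_not, ← mem_singleton, ← hi₀, mem_compl]

theorem exists_saturated_eq_sup_or_insert (hB : ∀ i, #(B i) = 2)
    (hdisj : Pairwise (Disjoint on B)) (hα : Fintype.card α = 2 * d + 1) {k : ℕ}
    {𝒜 : Finset (Finset α)} (h𝒜 : IsEventown k 𝒜) (hsat : ∀ A ∈ 𝒜, Saturated B A) :
    ∃ i₀, (∀ j, i₀ ∉ B j) ∧
      (∀ A ∈ 𝒜, (∃ S : Finset (Fin d), A = S.sup B) ∨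
        ∃ S : Finset (Fin d), A = insert i₀ (S.sup B)) ∧
      #(𝒜.filter (i₀ ∈ ·)) ≤ k - 1 := by
  obtain ⟨i₀, hi₀⟩ := exists_mem_univ_sup_iff_ne hB hdisj hα
  have herase : ∀ A : Finset α, A.erase i₀ = A ∩ univ.sup B := fun A => by
    ext x
    rw [mem_erase, mem_inter, hi₀, and_comm]
  refine ⟨i₀, fun j hj => (hi₀ i₀).1 (mem_sup.2 ⟨j, mem_univ j, hj⟩) rfl, fun A hA => ?_, ?_⟩
  · have hA' := herase A ▸ (hsat A hA).inter_sup_eq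
    by_cases h : i₀ ∈ A
    · exact .inr ⟨_, by rw [← hA', insert_erase h]⟩
    · exact .inl ⟨_, by rw [← hA', erase_eq_of_notMem h]⟩
  · by_contra! hlt
    obtain ⟨S, hS, hSk⟩ := exists_subset_card_eq (show k ≤ #(𝒜.filter (i₀ ∈ ·)) by omega)
    have hS𝒜 : S ⊆ 𝒜 := hS.trans (filter_subset _ _)
    have hmem : i₀ ∈ S.inf id := mem_inf.2 fun A hA => (mem_filter.1 (hS hA)).2
    have heven : Even #((S.inf id).erase i₀) := by
      rw [herase, (Saturated.inf fun A hA => hsat A (hS𝒜 hA)).inter_sup_eq]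
      exact even_card_sup (fun i => (hB i).symm ▸ even_two) hdisj _
    have hodd := h𝒜 S hS𝒜 hSk
    rw [← insert_erase hmem, card_insert_of_notMem (notMem_erase i₀ _)] at hodd
    exact Nat.even_add_one.1 hodd heven
end Parity

lemma two_pow_add_lt_of_card_le {n k a b : ℕ} (hk : 3 ≤ k)
    (hn : 2 * Nat.clog 2 (k - 1) + 4 ≤ n)
    (ha : (3 : ℚ) / 4 * 2 ^ (n / 2) + ((k : ℚ) - 1) * n < a) (hab : a ≤ b + (k - 1) * n) :
    2 ^ (n / 2 - 1) + (k - 2) < b := by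
  have hk₁ : k - 1 ≤ 2 ^ (n / 2 - 2) :=
    (Nat.le_pow_clog one_lt_two _).trans (Nat.pow_le_pow_right two_pos (by omega))
  have hpow : ∀ j ≤ 2, 2 ^ (n / 2 - j) * 2 ^ j = 2 ^ (n / 2) := fun j hj => by
    rw [← pow_add, Nat.sub_add_cancel (by omega)]
  have hb : 3 * 2 ^ (n / 2 - 2) < b := by
    have hab' : (a : ℚ) ≤ b + ((k : ℚ) - 1) * n := by
      have := (Nat.cast_le (α := ℚ)).2 hab
      push_cast [Nat.cast_sub (by omega : 1 ≤ k)] at this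
      exact this
    have h4 : ((2 ^ (n / 2) : ℕ) : ℚ) = 4 * ((2 ^ (n / 2 - 2) : ℕ) : ℚ) := by
      rw [← hpow 2 le_rfl]; push_cast; ring
    push_cast at h4
    exact_mod_cast (by linarith : (3 * 2 ^ (n / 2 - 2) : ℚ) < b)
  have := hpow 1 (by norm_num)
  have := hpow 2 le_rfl
  omega

/-- Stability theorem for k-wise eventowns (k ≥ 3). -/
theorem kwise_eventown_stability (n k : ℕ) (hk : 3 ≤ k)
    (hn : 2 * Nat.clog 2 (k - 1) + 4 ≤ n)
    (𝒜 : Finset (Finset (Fin n)))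
    (hkwise : ∀ S : Finset (Finset (Fin n)), S ⊆ 𝒜 → S.card = k → Even (S.inf id).card)
    (hsize : (3 : ℚ) / 4 * 2 ^ (n / 2) + ((k : ℚ) - 1) * n < (𝒜.card : ℚ)) :
    ∃ B : Fin (n / 2) → Finset (Fin n),
      (∀ i, (B i).card = 2) ∧
      (∀ i j, i ≠ j → Disjoint (B i) (B j)) ∧
      (Even n → ∀ A ∈ 𝒜, ∃ S : Finset (Fin (n / 2)), A = S.sup B) ∧
      (Odd n → ∃ istar : Fin n,
        (∀ j, istar ∉ B j) ∧
        (∀ A ∈ 𝒜, (∃ S : Finset (Fin (n / 2)), A = S.sup B) ∨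
          (∃ S : Finset (Fin (n / 2)), A = insert istar (S.sup B))) ∧
        (𝒜.filter fun A => istar ∈ A).card ≤ k - 1) := by
  obtain ⟨ℬ, hℬ𝒜, hℬ, hclean⟩ := exists_isEventownUpTo_subset hkwise
  rw [Fintype.card_fin] at hclean
  obtain ⟨B, hB2, hdisj, hsat⟩ := exists_pairs_saturated hk (by rw [Fintype.card_fin]; omega)
    hkwise hℬ𝒜 hℬ (two_pow_add_lt_of_card_le hk hn hsize hclean)
  refine ⟨B, hB2, fun i j hij => hdisj hij, fun ⟨m, hm⟩ A hA => ?_, fun ⟨m, hm⟩ => ?_⟩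
  · exact (hsat A hA).exists_eq_sup hB2 hdisj (by rw [Fintype.card_fin]; omega)
  · exact exists_saturated_eq_sup_or_insert hB2 hdisj (by rw [Fintype.card_fin]; omega) hkwise hsat
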